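/- Let C be the middle-third Cantor set. Then {1/x₁ + 1/x₂ + 1/x₃ + 1/x₄ : x₁ ∈ C ∩ [6/27, 7/27], x₂, x₃, x₄ ∈ C ∩ [2/3, 1]} ⊇ [81/19 + 1 + 18/7, 3 + 9/8 + 81/18]. -/

import Mathlib

/-!
Write `x₁ = (6 + a) / 27` and `xⱼ = (2 + bⱼ) / 3` with `a, bⱼ ∈ C`, so that the sum becomes
`27 / (6 + a) + ∑ⱼ 3 / (2 + bⱼ)`. Each summand decreases on `[0, 1]` with slope between
`k / (c + 1)²` and `k / c²`, and the largest slope of any summand is at most the sum of the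
smallest slopes of the others, a thickness condition. So when the Cantor interval of one
coordinate is split into thirds, the drop of its summand across the removed middle third is
compensated by the other summands, and `y` stays between the values of the sum at the two extreme
corners of one of the two resulting boxes. Refining every coordinate level by level produces points
of `C⁴` whose values converge to `y`, and the image of the compact set `C⁴` is closed.
-/

open Set Finset Filter Topology Function

lemma one_mem_cantorSet : (1 : ℝ) ∈ cantorSet := by
  refine mem_iInter.mpr fun n => ?_
  induction n with
  | zero => simp
  | succ n ih => exact Or.inr ⟨1, ih, by norm_num⟩

lemma div_three_mem_cantorSet {x : ℝ} (hx : x ∈ cantorSet) : x / 3 ∈ cantorSet := by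
  rw [cantorSet_eq_union_halves]
  exact Or.inl ⟨x, hx, rfl⟩

lemma two_add_div_three_mem_cantorSet {x : ℝ} (hx : x ∈ cantorSet) :
    (2 + x) / 3 ∈ cantorSet := by
  rw [cantorSet_eq_union_halves]
  exact Or.inr ⟨x, hx, rfl⟩

/-- For `w = 3⁻ⁿ` the pieces `a + w • C` are the traces on `C` of the intervals of the `n`-th
stage of its construction. -/
def IsCantorPiece (a w : ℝ) : Prop :=
  ∀ x ∈ cantorSet, a + w * x ∈ cantorSet

namespace IsCantorPiece

variable {a w : ℝ}

lemma zero_one : IsCantorPiece 0 1 := by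
  intro x hx
  simpa using hx

lemma left (h : IsCantorPiece a w) : IsCantorPiece a (w / 3) := by
  intro x hx
  convert h _ (div_three_mem_cantorSet hx) using 2
  ring

lemma right (h : IsCantorPiece a w) : IsCantorPiece (a + 2 * w / 3) (w / 3) := by
  intro x hx
  convert h _ (two_add_div_three_mem_cantorSet hx) using 1
  ring

lemma mem (h : IsCantorPiece a w) : a ∈ cantorSet := by
  simpa using h 0 zero_mem_cantorSet

lemma nonneg (h : IsCantorPiece a w) : 0 ≤ a :=
  (cantorSet_subset_unitInterval h.mem).1

lemma add_le_one (h : IsCantorPiece a w) : a + w ≤ 1 :=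
  (cantorSet_subset_unitInterval (by simpa using h 1 one_mem_cantorSet)).2

lemma exists_third {g : ℝ → ℝ} {h L U y : ℝ} (ha : IsCantorPiece a h)
    (hlo : g (a + h) + L ≤ y) (hhi : y ≤ g a + U)
    (hgap : g (a + h / 3) - g (a + 2 * h / 3) ≤ U - L) :
    ∃ a', IsCantorPiece a' (h / 3) ∧ g (a' + h / 3) + L ≤ y ∧ y ≤ g a' + U := by
  by_cases hleft : g (a + h / 3) + L ≤ y
  · exact ⟨a, ha.left, hleft, hhi⟩
  · refine ⟨a + 2 * h / 3, ha.right, ?_, by linarith⟩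
    rwa [show a + 2 * h / 3 + h / 3 = a + h by ring]

end IsCantorPiece

def SlopeBounds (g : ℝ → ℝ) (m M : ℝ) : Prop :=
  ∀ u ∈ Icc (0 : ℝ) 1, ∀ v ∈ Icc (0 : ℝ) 1, u ≤ v →
    m * (v - u) ≤ g u - g v ∧ g u - g v ≤ M * (v - u)

lemma SlopeBounds.continuousOn {g : ℝ → ℝ} {m M : ℝ} (hm : 0 ≤ m) (hg : SlopeBounds g m M) :
    ContinuousOn g (Icc 0 1) := by
  have hdist : ∀ u ∈ Icc (0 : ℝ) 1, ∀ v ∈ Icc (0 : ℝ) 1, u ≤ v →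
      dist (g u) (g v) ≤ M * dist u v := by
    intro u hu v hv huv
    obtain ⟨hlow, hup⟩ := hg u hu v hv huv
    rw [Real.dist_eq, Real.dist_eq, abs_of_nonneg (by nlinarith), abs_of_nonpos (by linarith)]
    linarith
  refine (LipschitzOnWith.of_dist_le' (K := M) fun u hu v hv => ?_).continuousOn
  rcases le_total u v with huv | hvu
  · exact hdist u hu v hv huv
  · rw [dist_comm, dist_comm u]
    exact hdist v hv u hu hvu

lemma SlopeBounds.sub_bounds {g : ℝ → ℝ} {m M u w : ℝ} (hg : SlopeBounds g m M) (hu : 0 ≤ u)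
    (hw : 0 ≤ w) (huw : u + w ≤ 1) : m * w ≤ g u - g (u + w) ∧ g u - g (u + w) ≤ M * w := by
  simpa using hg u ⟨hu, by linarith⟩ (u + w) ⟨by linarith, huw⟩ (by linarith)

lemma slopeBounds_div_add {k c : ℝ} (hk : 0 ≤ k) (hc : 0 < c) :
    SlopeBounds (fun s => k / (c + s)) (k / (c + 1) ^ 2) (k / c ^ 2) := by
  intro u ⟨hu0, hu1⟩ v ⟨hv0, hv1⟩ huv
  have hdiff : k / (c + u) - k / (c + v) = k * (v - u) / ((c + u) * (c + v)) := by
    field_simp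
    ring
  have hnum : 0 ≤ k * (v - u) := mul_nonneg hk (by linarith)
  rw [hdiff, div_mul_eq_mul_div, div_mul_eq_mul_div]
  constructor
  · exact div_le_div_of_nonneg_left hnum (by positivity) (by nlinarith)
  · exact div_le_div_of_nonneg_left hnum (by positivity) (by nlinarith)

section Bracket

variable {ι : Type*} [Fintype ι]

structure CantorBracket (g : ι → ℝ → ℝ) (y : ℝ) (a w : ι → ℝ) : Prop where
  piece : ∀ i, IsCantorPiece (a i) (w i)
  lower : ∑ i, g i (a i + w i) ≤ y
  upper : y ≤ ∑ i, g i (a i)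

variable {g : ι → ℝ → ℝ} {m M : ι → ℝ} {y : ℝ}

lemma CantorBracket.dist_le (hg : ∀ i, SlopeBounds (g i) (m i) (M i))
    {a : ι → ℝ} {h : ℝ} (hh : 0 ≤ h) (hb : CantorBracket g y a fun _ => h) :
    dist (∑ i, g i (a i)) y ≤ (∑ i, M i) * h := by
  have hdrop : ∑ i, g i (a i) - ∑ i, g i (a i + h) ≤ (∑ i, M i) * h := by
    rw [sum_mul, ← sum_sub_distrib]
    exact sum_le_sum fun i _ =>
      ((hg i).sub_bounds (hb.piece i).nonneg hh (hb.piece i).add_le_one).2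
  rw [Real.dist_eq, abs_of_nonneg (by linarith [hb.upper])]
  linarith [hb.lower]

variable [DecidableEq ι]

lemma sum_update_eq_add_sum_erase (F : ι → ℝ → ℝ) (a : ι → ℝ) (i : ι) (t : ℝ) :
    ∑ j, F j (update a i t j) = F i t + ∑ j ∈ univ.erase i, F j (a j) := by
  rw [← add_sum_erase _ _ (mem_univ i), update_self]
  congr 1
  exact sum_congr rfl fun j hj => by rw [update_of_ne (ne_of_mem_erase hj)]

lemma middle_third_drop_le (hm : ∀ i, 0 ≤ m i) (hg : ∀ i, SlopeBounds (g i) (m i) (M i))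
    (hthick : ∀ i, M i ≤ ∑ j ∈ univ.erase i, m j) {a w : ι → ℝ}
    (hpiece : ∀ j, IsCantorPiece (a j) (w j)) {i : ι} {h : ℝ} (hi : w i = h) (hw : ∀ j, h / 3 ≤ w j) :
    g i (a i + h / 3) - g i (a i + 2 * h / 3) ≤
      ∑ j ∈ univ.erase i, g j (a j) - ∑ j ∈ univ.erase i, g j (a j + w j) := by
  have hh : 0 ≤ h := by linarith [hw i]
  have h0 := (hpiece i).nonneg
  have h1 := (hpiece i).add_le_one
  rw [hi] at h1
  calc g i (a i + h / 3) - g i (a i + 2 * h / 3)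
      ≤ M i * (h / 3) := by
        have hmid := (hg i).sub_bounds (u := a i + h / 3) (w := h / 3) (by linarith)
          (by linarith) (by linarith)
        rw [show a i + h / 3 + h / 3 = a i + 2 * h / 3 by ring] at hmid
        exact hmid.2
    _ ≤ (∑ j ∈ univ.erase i, m j) * (h / 3) :=
        mul_le_mul_of_nonneg_right (hthick i) (by linarith)
    _ ≤ ∑ j ∈ univ.erase i, (g j (a j) - g j (a j + w j)) := by
        rw [sum_mul]
        refine sum_le_sum fun j _ => (mul_le_mul_of_nonneg_left (hw j) (hm j)).trans ?_
        exact ((hg j).sub_bounds (hpiece j).nonneg (by linarith [hw j])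
          (hpiece j).add_le_one).1
    _ = _ := sum_sub_distrib _ _

lemma CantorBracket.refine (hm : ∀ i, 0 ≤ m i) (hg : ∀ i, SlopeBounds (g i) (m i) (M i))
    (hthick : ∀ i, M i ≤ ∑ j ∈ univ.erase i, m j) {a w : ι → ℝ}
    (hb : CantorBracket g y a w) {i : ι} {h : ℝ} (hi : w i = h) (hw : ∀ j, h / 3 ≤ w j) :
    ∃ t, CantorBracket g y (update a i t) (update w i (h / 3)) := by
  have hlo := hb.lower
  have hhi := hb.upper
  rw [← add_sum_erase _ _ (mem_univ i), hi] at hlo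
  rw [← add_sum_erase _ _ (mem_univ i)] at hhi
  obtain ⟨t, ht, htlo, hthi⟩ := (hi ▸ hb.piece i).exists_third hlo hhi
    (middle_third_drop_le hm hg hthick hb.piece hi hw)
  refine ⟨t, ⟨fun j => ?_, ?_, ?_⟩⟩
  · rcases eq_or_ne j i with rfl | hj
    · simpa using ht
    · simpa [update_of_ne hj] using hb.piece j
  · have hupd : ∀ j, update a i t j + update w i (h / 3) j = update (a + w) i (t + h / 3) j :=
      fun j => by rcases eq_or_ne j i with rfl | hj <;> simp [update_of_ne, *]
    simpa only [hupd, sum_update_eq_add_sum_erase, Pi.add_apply] using htlo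
  · rwa [sum_update_eq_add_sum_erase]

lemma CantorBracket.exists_refine_finset (hm : ∀ i, 0 ≤ m i)
    (hg : ∀ i, SlopeBounds (g i) (m i) (M i)) (hthick : ∀ i, M i ≤ ∑ j ∈ univ.erase i, m j)
    {a : ι → ℝ} {h : ℝ} (hh : 0 ≤ h) (hb : CantorBracket g y a fun _ => h) (R : Finset ι) :
    ∃ a', CantorBracket g y a' fun j => if j ∈ R then h / 3 else h := by
  induction R using Finset.induction_on with
  | empty => simpa using ⟨a, hb⟩
  | insert i R hiR ih =>
    obtain ⟨a', hb'⟩ := ih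
    obtain ⟨t, ht⟩ := hb'.refine hm hg hthick (h := h) (if_neg hiR)
      fun j => by split_ifs <;> linarith
    refine ⟨update a' i t, ?_⟩
    convert ht using 2 with j
    rcases eq_or_ne j i with rfl | hj <;> simp [update_of_ne, *]

lemma exists_cantorBracket_pow (hm : ∀ i, 0 ≤ m i)
    (hg : ∀ i, SlopeBounds (g i) (m i) (M i)) (hthick : ∀ i, M i ≤ ∑ j ∈ univ.erase i, m j)
    (hy : y ∈ Icc (∑ i, g i 1) (∑ i, g i 0)) (n : ℕ) :
    ∃ a, CantorBracket g y a fun _ => (1 / 3) ^ n := by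
  induction n with
  | zero => exact ⟨0, fun _ => IsCantorPiece.zero_one, by simpa using hy.1, by simpa using hy.2⟩
  | succ n ih =>
    obtain ⟨a, hb⟩ := ih
    obtain ⟨a', hb'⟩ := hb.exists_refine_finset hm hg hthick (by positivity) univ
    refine ⟨a', ?_⟩
    convert hb' using 2 with j
    rw [if_pos (Finset.mem_univ j)]
    ring

theorem Icc_subset_image_sum_cantorSet (hm : ∀ i, 0 ≤ m i)
    (hg : ∀ i, SlopeBounds (g i) (m i) (M i)) (hthick : ∀ i, M i ≤ ∑ j ∈ univ.erase i, m j) :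
    Icc (∑ i, g i 1) (∑ i, g i 0) ⊆
      (fun x => ∑ i, g i (x i)) '' univ.pi fun _ => cantorSet := by
  intro y hy
  have hclosed : IsClosed ((fun x => ∑ i, g i (x i)) '' univ.pi fun _ => cantorSet) := by
    refine ((isCompact_univ_pi fun _ => isCompact_cantorSet).image_of_continuousOn ?_).isClosed
    refine continuousOn_finsetSum _ fun i _ => ?_
    exact ((hg i).continuousOn (hm i)).comp (continuous_apply i).continuousOn
      fun x hx => cantorSet_subset_unitInterval (hx i (mem_univ i))
  choose a ha using exists_cantorBracket_pow hm hg hthick hy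
  have hlim : Tendsto (fun n => ∑ i, g i (a n i)) atTop (𝓝 y) := by
    refine tendsto_iff_dist_tendsto_zero.mpr <| squeeze_zero (fun _ => dist_nonneg)
      (fun n => (ha n).dist_le hg (by positivity)) ?_
    simpa using (tendsto_pow_atTop_nhds_zero_of_lt_one (by norm_num : (0 : ℝ) ≤ 1 / 3)
      (by norm_num)).const_mul (∑ i, M i)
  exact hclosed.closure_subset <| mem_closure_of_tendsto hlim <| Eventually.of_forall
    fun n => ⟨a n, fun i _ => ((ha n).piece i).mem, rfl⟩

end Bracket

theorem four_reciprocals_cantorSet_supset_Icc_M :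
    Set.Icc (81 / 19 + 1 + 18 / 7 : ℝ) (3 + 9 / 8 + 81 / 18 : ℝ) ⊆
      {y : ℝ | ∃ x₁ ∈ cantorSet ∩ Set.Icc (6 / 27 : ℝ) (7 / 27),
        ∃ x₂ ∈ cantorSet ∩ Set.Icc (2 / 3 : ℝ) 1,
        ∃ x₃ ∈ cantorSet ∩ Set.Icc (2 / 3 : ℝ) 1,
        ∃ x₄ ∈ cantorSet ∩ Set.Icc (2 / 3 : ℝ) 1,
        y = 1 / x₁ + 1 / x₂ + 1 / x₃ + 1 / x₄} := by
  set k : Fin 4 → ℝ := ![27, 3, 3, 3]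
  set c : Fin 4 → ℝ := ![6, 2, 2, 2]
  have hk : ∀ i, 0 ≤ k i := fun i => by fin_cases i <;> norm_num [k]
  have hc : ∀ i, 0 < c i := fun i => by fin_cases i <;> norm_num [c]
  have hthick : ∀ i, k i / c i ^ 2 ≤ ∑ j ∈ univ.erase i, k j / (c j + 1) ^ 2 := by
    intro i
    rw [sum_erase_eq_sub (Finset.mem_univ i), Fin.sum_univ_four]
    fin_cases i <;> simp [k, c] <;> norm_num
  intro y hy
  obtain ⟨x, hx, rfl⟩ := Icc_subset_image_sum_cantorSet (fun i => div_nonneg (hk i) (sq_nonneg _))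
    (fun i => slopeBounds_div_add (hk i) (hc i)) hthick
    (Icc_subset_Icc (by simp [k, c, Fin.sum_univ_four]; norm_num)
      (by simp [k, c, Fin.sum_univ_four]; norm_num) hy)
  have hC : ∀ i, x i ∈ cantorSet := fun i => hx i (Set.mem_univ i)
  have hx01 : ∀ i, x i ∈ Icc (0 : ℝ) 1 := fun i => cantorSet_subset_unitInterval (hC i)
  have hmem₁ : (6 + x 0) / 27 ∈ cantorSet := by
    convert div_three_mem_cantorSet (two_add_div_three_mem_cantorSet
      (div_three_mem_cantorSet (hC 0))) using 1
    ring
  have hIcc : ∀ i, (2 + x i) / 3 ∈ Icc (2 / 3 : ℝ) 1 := fun i => by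
    constructor <;> linarith [(hx01 i).1, (hx01 i).2]
  refine ⟨_, ⟨hmem₁, by constructor <;> linarith [(hx01 0).1, (hx01 0).2]⟩,
    _, ⟨two_add_div_three_mem_cantorSet (hC 1), hIcc 1⟩,
    _, ⟨two_add_div_three_mem_cantorSet (hC 2), hIcc 2⟩,
    _, ⟨two_add_div_three_mem_cantorSet (hC 3), hIcc 3⟩, ?_⟩
  simp [Fin.sum_univ_four, k, c]
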